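/- Let A, B, C, D be sets with B and C finite, and let T = (Q, δ), T' = (Q', δ'), T'' = (Q'', δ'') be Turing automata of sorts A ⊕ B, B ⊕ C, and C ⊕ D respectively. Then the derived composition is associative up to the canonical state bijection: (T ∘ T') ∘ T'' and T ∘ (T' ∘ T'') are Turing automata of sort A ⊕ D with state sets (Q × Q') × Q'' and Q × (Q' × Q'') respectively, and for all states and all interfaces x, y of (A ⊕ D) ⊕ {*}, ((((q,q'),q''),x),((((r,r'),r'')),y)) is a transition of (T ∘ T') ∘ T'' if and only if (((q,(q',q'')),x),((r,(r',r'')),y)) is a transition of T ∘ (T' ∘ T''). -/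

import Mathlib

/-!
The trace `κ_A` computed by Kleene elimination is the relation of *walks*: runs of transitions in
which reaching `⟨z,1⟩` resumes at `⟨z,2⟩` and vice versa, for `z ∈ A`. Hence `T ∘ T'` is the
relation of walks in `T ⊕ T'` that jump between the two copies of each `b ∈ B`. Nesting
compositions nests walks, and Kleene's denesting `(x + y)* = (x* y)* x*` flattens both
`(T ∘ T') ∘ T''` and `T ∘ (T' ∘ T'')` into walks in the threefold sum of the automata that jump
across both the `B`- and the `C`-interfaces. The two threefold sums differ only by the
associators of `×` and `⊕`.
-/

/-- The transition relation of a Turing automaton of sort `X`: a relation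
`δ ⊆ (Q × X_*)²`, where `X_* = X ⊕ {*}` is modeled as `Option X`, with `none` the anchor. -/
def TRel (Q X : Type*) : Type _ := (Q × Option X) → (Q × Option X) → Prop

/-- Relational composition (product of the semiring of binary relations on `Q`). -/
def rcomp {Q : Type*} (r s : Q → Q → Prop) : Q → Q → Prop := fun a c => ∃ b, r a b ∧ s b c

/-- Union of relations (sum of the semiring of binary relations on `Q`). -/
def runion {Q : Type*} (r s : Q → Q → Prop) : Q → Q → Prop := fun a b => r a b ∨ s a b

/-- 2×2 matrices of binary relations on `Q`. -/
def Mat2 (Q : Type*) : Type _ := Fin 2 → Fin 2 → (Q → Q → Prop)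

/-- The transposition of indices used to interchange the two rows of a matrix. -/
def swap2 : Fin 2 → Fin 2 := fun i => if i = 0 then 1 else 0

/-- Alternating matrix product `M ⊙ N := M · (σN)`, where `σN` interchanges the rows of `N`. -/
def altMul {Q : Type*} (M N : Mat2 Q) : Mat2 Q :=
  fun i j => runion (rcomp (M i 0) (N (swap2 0) j)) (rcomp (M i 1) (N (swap2 1) j))

/-- `U⁰ := σI₂`: identity relations off the diagonal, empty relations on the diagonal. -/
def altOne {Q : Type*} : Mat2 Q := fun i j => if i = j then (fun _ _ => False) else Eq

/-- Alternating matrix powers: `U⁰ = σI₂`, `U^(n+1) = Uⁿ ⊙ U`. -/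
def altPow {Q : Type*} (U : Mat2 Q) : ℕ → Mat2 Q
  | 0 => altOne
  | n + 1 => altMul (altPow U n) U

/-- Alternating product of a row vector with a matrix: `u ⊙ M := u · (σM)`. -/
def altRowMul {Q : Type*} (u : Fin 2 → Q → Q → Prop) (M : Mat2 Q) : Fin 2 → Q → Q → Prop :=
  fun j => runion (rcomp (u 0) (M (swap2 0) j)) (rcomp (u 1) (M (swap2 1) j))

/-- Alternating product of a row vector with a column vector: `u ⊙ v := u · (σv)`. -/
def altRowCol {Q : Type*} (u v : Fin 2 → Q → Q → Prop) : Q → Q → Prop :=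
  runion (rcomp (u 0) (v (swap2 0))) (rcomp (u 1) (v (swap2 1)))

/-- A family `λ_{x,y}` of binary relations on `Q` indexed by pairs of interfaces. -/
def LamFamily (Q X : Type*) : Type _ := Option X → Option X → (Q → Q → Prop)

/-- The base case of the Kleene elimination: `λ^∅_{x,y} = {(q,r) | ((q,x),(r,y)) ∈ δ}`. -/
def lamInit {Q A B : Type*} (δ : TRel Q (A ⊕ A ⊕ B)) : LamFamily Q (A ⊕ A ⊕ B) :=
  fun x y q r => δ (q, x) (r, y)

/-- One Kleene elimination step at `z ∈ A`:
`λ^(C∪{z})_{x,y} := λ^C_{x,y} ∪ ⋃_{n≥0} u ⊙ Uⁿ ⊙ v` with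
`u = (λ^C_{x,⟨z,1⟩}, λ^C_{x,⟨z,2⟩})`, `v = (λ^C_{⟨z,1⟩,y}; λ^C_{⟨z,2⟩,y})` and
`U = (λ^C_{⟨z,i⟩,⟨z,j⟩})_{i,j}`. -/
def elimStep {Q A B : Type*} (lam : LamFamily Q (A ⊕ A ⊕ B)) (z : A) :
    LamFamily Q (A ⊕ A ⊕ B) :=
  fun x y =>
    let p : Fin 2 → Option (A ⊕ A ⊕ B) := ![some (Sum.inl z), some (Sum.inr (Sum.inl z))]
    let u : Fin 2 → Q → Q → Prop := fun i => lam x (p i)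
    let U : Mat2 Q := fun i j => lam (p i) (p j)
    let v : Fin 2 → Q → Q → Prop := fun i => lam (p i) y
    runion (lam x y) (fun q r => ∃ n, altRowCol (altRowMul u (altPow U n)) v q r)

/-- Kleene elimination along a list of elements of `A`. -/
def lamList {Q A B : Type*} (δ : TRel Q (A ⊕ A ⊕ B)) : List A → LamFamily Q (A ⊕ A ⊕ B)
  | [] => lamInit δ
  | z :: L => elimStep (lamList δ L) z

/-- The trace `κ_A T` of a Turing automaton of sort `A ⊕ A ⊕ B` (`A` finite): its
transitions are `((q,b),(r,b'))` iff `(q,r) ∈ λ^A_{b,b'}`. -/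
def kappa {Q A B : Type*} [Fintype A] (δ : TRel Q (A ⊕ A ⊕ B)) : TRel Q B :=
  fun a b =>
    lamList δ Finset.univ.toList (a.2.map (fun x => Sum.inr (Sum.inr x)))
      (b.2.map (fun x => Sum.inr (Sum.inr x))) a.1 b.1

/-- The relabeling `T · ρ` of a Turing automaton along a bijection `ρ : X ≃ Y`:
`((q, ρ_* x),(r, ρ_* y))` is a transition iff `((q,x),(r,y))` is, where `ρ_*(*) = *`. -/
def relabel {Q X Y : Type*} (ρ : X ≃ Y) (δ : TRel Q X) : TRel Q Y :=
  fun a b => δ (a.1, a.2.map ρ.symm) (b.1, b.2.map ρ.symm)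

/-- The sum `T ⊕ T'` of Turing automata of sorts `X` and `Y`: states `Q × Q'`, and a
transition happens in one component while the other state stays put; anchors identified. -/
def autSum {Q Q' X Y : Type*} (δ : TRel Q X) (δ' : TRel Q' Y) : TRel (Q × Q') (X ⊕ Y) :=
  fun a b =>
    (∃ u v : Option X, a.2 = u.map Sum.inl ∧ b.2 = v.map Sum.inl ∧
      a.1.2 = b.1.2 ∧ δ (a.1.1, u) (b.1.1, v)) ∨
    (∃ u v : Option Y, a.2 = u.map Sum.inr ∧ b.2 = v.map Sum.inr ∧
      a.1.1 = b.1.1 ∧ δ' (a.1.2, u) (b.1.2, v))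

/-- The identity Turing automaton `1_A` of sort `A ⊕ A`: a single state, with transitions
from `⟨a,1⟩` to `⟨a,2⟩` and back for every `a ∈ A`. -/
def idAut (A : Type*) : TRel PUnit (A ⊕ A) :=
  fun a b =>
    (∃ x : A, a.2 = some (Sum.inl x) ∧ b.2 = some (Sum.inr x)) ∨
    (∃ x : A, a.2 = some (Sum.inr x) ∧ b.2 = some (Sum.inl x))

/-- The permutation `c_{A,B⊕B} ⊗ 1_C` rearranging `(A ⊕ B) ⊕ (B ⊕ C)` into
`B ⊕ B ⊕ (A ⊕ C)`, used to define the derived composition. -/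
def compPerm (A B C : Type*) : (A ⊕ B) ⊕ (B ⊕ C) ≃ B ⊕ B ⊕ (A ⊕ C) where
  toFun x := match x with
    | .inl (.inl a) => .inr (.inr (.inl a))
    | .inl (.inr b) => .inl b
    | .inr (.inl b) => .inr (.inl b)
    | .inr (.inr c) => .inr (.inr (.inr c))
  invFun y := match y with
    | .inl b => .inl (.inr b)
    | .inr (.inl b) => .inr (.inl b)
    | .inr (.inr (.inl a)) => .inl (.inl a)
    | .inr (.inr (.inr c)) => .inr (.inr c)
  left_inv x := by rcases x with (a | b) | (b | c) <;> rfl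
  right_inv y := by rcases y with b | (b | (a | c)) <;> rfl

/-- The derived composition `T ∘ T' := κ_B((T ⊕ T') · (c_{A,B⊕B} ⊗ 1_C))` of Turing
automata of sorts `A ⊕ B` and `B ⊕ C` (`B` finite). -/
def compAut {Q Q' A B C : Type*} [Fintype B]
    (δ : TRel Q (A ⊕ B)) (δ' : TRel Q' (B ⊕ C)) : TRel (Q × Q') (A ⊕ C) :=
  kappa (relabel (compPerm A B C) (autSum δ δ'))

open Relation Function

section Walk

variable {Q X : Type*} {δ hop : TRel Q X}

@[ext]
theorem TRel.ext {δ δ' : TRel Q X} (h : ∀ a b, δ a b ↔ δ' a b) : δ = δ' :=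
  funext fun a => funext fun b => propext (h a b)

def walk (δ hop : TRel Q X) : TRel Q X :=
  Comp (ReflTransGen (Comp δ hop)) δ

theorem walk_of_step {a b : Q × Option X} (h : δ a b) : walk δ hop a b := ⟨a, .refl, h⟩

theorem walk_append {a b c d : Q × Option X} (hab : walk δ hop a b) (hbc : hop b c)
    (hcd : walk δ hop c d) : walk δ hop a d := by
  obtain ⟨m, ham, hmb⟩ := hab
  obtain ⟨k, hck, hkd⟩ := hcd
  exact ⟨k, (ham.tail ⟨b, hmb, hbc⟩).trans hck, hkd⟩

theorem walk_snoc {a b c d : Q × Option X} (hab : walk δ hop a b) (hbc : hop b c) (hcd : δ c d) :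
    walk δ hop a d :=
  walk_append hab hbc (walk_of_step hcd)

theorem walk_iff {a b : Q × Option X} :
    walk δ hop a b ↔ δ a b ∨ ∃ c d, walk δ hop a c ∧ hop c d ∧ δ d b := by
  constructor
  · rintro ⟨m, ham, hmb⟩
    rcases ham.cases_tail with rfl | ⟨c, hac, d, hcd, hdm⟩
    · exact .inl hmb
    · exact .inr ⟨d, m, ⟨c, hac, hcd⟩, hdm, hmb⟩
  · rintro (h | ⟨c, d, hac, hcd, hdb⟩)
    exacts [walk_of_step h, walk_snoc hac hcd hdb]

theorem walk_mono {hop' : TRel Q X} (h : ∀ a b, hop a b → hop' a b) {a b : Q × Option X} :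
    walk δ hop a b → walk δ hop' a b :=
  fun ⟨m, ham, hmb⟩ =>
    ⟨m, ReflTransGen.mono (fun _ _ ⟨c, hc, hc'⟩ => ⟨c, hc, h _ _ hc'⟩) _ _ ham, hmb⟩

theorem walk_of_forall_not_hop (h : ∀ a b, ¬ hop a b) : walk δ hop = δ := by
  ext a b
  refine ⟨fun ⟨m, ham, hmb⟩ => ?_, walk_of_step⟩
  rcases ham.cases_tail with rfl | ⟨_, _, _, _, h'⟩
  exacts [hmb, (h _ _ h').elim]

/-- Kleene's denesting `(x + y)* = (x* y)* x*`. -/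
theorem walk_walk (hop₁ hop₂ : TRel Q X) :
    walk (walk δ hop₁) hop₂ = walk δ (fun a b => hop₁ a b ∨ hop₂ a b) := by
  ext a b
  constructor
  · rintro ⟨m, ham, hmb⟩
    induction ham generalizing b with
    | refl => exact walk_mono (fun _ _ => .inl) hmb
    | tail _ hcm ih =>
      obtain ⟨c', hcc', hc'm⟩ := hcm
      exact walk_append (ih _ hcc') (.inr hc'm) (walk_mono (fun _ _ => .inl) hmb)
  · rintro ⟨m, ham, hmb⟩
    induction ham generalizing b with
    | refl => exact walk_of_step (walk_of_step hmb)
    | tail _ hcm ih =>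
      obtain ⟨c', hcc', hc'm⟩ := hcm
      obtain ⟨k, hak, hkc'⟩ := ih _ hcc'
      rcases hc'm with h₁ | h₂
      · exact ⟨k, hak, walk_snoc hkc' h₁ hmb⟩
      · exact walk_snoc ⟨k, hak, hkc'⟩ h₂ (walk_of_step hmb)

theorem walk_comap {Q' Y : Type*} (g : Q' × Option Y → Q × Option X) (δ : TRel Q X)
    (hop : TRel Q' Y) :
    walk (fun a b => δ (g a) (g b)) hop =
      fun a b => walk δ (Relation.Map hop g g) (g a) (g b) := by
  ext a b
  constructor
  · rintro ⟨m, ham, hmb⟩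
    exact ⟨g m, ham.lift g fun c d ⟨k, hck, hkd⟩ => ⟨g k, hck, k, d, hkd, rfl, rfl⟩,
      hmb⟩
  · rintro ⟨m, ham, hmb⟩
    obtain ⟨m', rfl, h⟩ :
        ∃ m', m = g m' ∧ ReflTransGen (Comp (fun a b => δ (g a) (g b)) hop) a m' := by
      clear hmb
      induction ham with
      | refl => exact ⟨a, rfl, .refl⟩
      | tail _ hcd ih =>
        obtain ⟨c', rfl, hc'⟩ := ih
        obtain ⟨k, hck, k', d', hkd', rfl, rfl⟩ := hcd
        exact ⟨d', rfl, hc'.tail ⟨k', hck, hkd'⟩⟩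
    exact ⟨m', h, hmb⟩

theorem walk_or_of_disjoint {other : TRel Q X}
    (h₁ : ∀ a b c, other a b → ¬ hop b c) (h₂ : ∀ a b c, hop a b → ¬ other b c) :
    walk (fun a b => δ a b ∨ other a b) hop = fun a b => walk δ hop a b ∨ other a b := by
  have hcomp : Comp (fun a b => δ a b ∨ other a b) hop = Comp δ hop := by
    ext a c
    refine ⟨fun ⟨b, hab, hbc⟩ => ?_, fun ⟨b, hab, hbc⟩ => ⟨b, .inl hab, hbc⟩⟩
    exact hab.elim (fun h => ⟨b, h, hbc⟩) (fun h => (h₁ a b c h hbc).elim)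
  ext a b
  simp only [walk, hcomp]
  constructor
  · rintro ⟨m, ham, hmb | hmb⟩
    · exact .inl ⟨m, ham, hmb⟩
    · rcases ham.cases_tail with rfl | ⟨_, _, _, _, h⟩
      exacts [.inr hmb, (h₂ _ _ _ h hmb).elim]
  · rintro (⟨m, ham, hmb⟩ | h)
    exacts [⟨m, ham, .inl hmb⟩, ⟨a, .refl, .inr h⟩]

end Walk

section Restrict

variable {Q X Y : Type*}

def restrict (f : Y → X) (δ : TRel Q X) : TRel Q Y :=
  fun a b => δ (Prod.map id (Option.map f) a) (Prod.map id (Option.map f) b)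

theorem restrict_restrict {Z : Type*} (f : Z → Y) (g : Y → X) (δ : TRel Q X) :
    restrict f (restrict g δ) = restrict (g ∘ f) δ := by
  ext ⟨q, x⟩ ⟨r, y⟩
  cases x <;> cases y <;> rfl

def portHop (link : X → X → Prop) : TRel Q X :=
  fun a b => a.1 = b.1 ∧ ∃ u v, a.2 = some u ∧ b.2 = some v ∧ link u v

theorem portHop_or (l₁ l₂ : X → X → Prop) :
    (fun a b => portHop (Q := Q) l₁ a b ∨ portHop l₂ a b) = portHop (l₁ ⊔ l₂) := by
  ext a b
  simp only [portHop, Pi.sup_apply, sup_Prop_eq]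
  grind

theorem map_portHop {Q' : Type*} {φ : Q → Q'} (hφ : Surjective φ) (f : X → Y)
    (link : X → X → Prop) :
    Relation.Map (portHop link) (Prod.map φ (Option.map f)) (Prod.map φ (Option.map f)) =
      portHop (Q := Q') (Relation.Map link f f) := by
  ext ⟨q, x⟩ ⟨r, y⟩
  constructor
  · rintro ⟨⟨q, _⟩, ⟨_, _⟩, ⟨rfl, u, v, rfl, rfl, huv⟩, h₁, h₂⟩
    simp only [Prod.map, Prod.mk.injEq, Option.map_some] at h₁ h₂
    exact ⟨h₁.1.symm.trans h₂.1, f u, f v, h₁.2.symm, h₂.2.symm, u, v, huv, rfl, rfl⟩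
  · rintro ⟨rfl, _, _, rfl, rfl, u, v, huv, rfl, rfl⟩
    obtain ⟨p, rfl⟩ := hφ q
    exact ⟨(p, some u), (p, some v), ⟨rfl, u, v, rfl, rfl, huv⟩, rfl, rfl⟩

theorem walk_restrict (f : Y → X) (δ : TRel Q X) (link : Y → Y → Prop) :
    walk (restrict f δ) (portHop link) =
      restrict f (walk δ (portHop (Relation.Map link f f))) := by
  unfold restrict
  rw [walk_comap, map_portHop surjective_id]

end Restrict

section Kleene

variable {Q A B : Type*}

theorem altRowMul_apply {u : Fin 2 → Q → Q → Prop} {M : Mat2 Q} {j : Fin 2} {q s : Q} :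
    altRowMul u M j q s ↔ ∃ i t, u i q t ∧ M (swap2 i) j t s := by
  simp only [altRowMul, runion, rcomp, Fin.exists_fin_two]

theorem altRowCol_apply {u v : Fin 2 → Q → Q → Prop} {q s : Q} :
    altRowCol u v q s ↔ ∃ i t, u i q t ∧ v (swap2 i) t s := by
  simp only [altRowCol, runion, rcomp, Fin.exists_fin_two]

theorem altRowMul_altOne (u : Fin 2 → Q → Q → Prop) : altRowMul u altOne = u := by
  funext j q s
  fin_cases j <;> simp [altRowMul, altOne, runion, rcomp, swap2]

theorem altRowMul_altMul (u : Fin 2 → Q → Q → Prop) (M N : Mat2 Q) :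
    altRowMul u (altMul M N) = altRowMul (altRowMul u M) N := by
  funext j q s
  simp only [altRowMul, altMul, runion, rcomp, eq_iff_iff]
  grind

def lamRel {X : Type*} (lam : LamFamily Q X) : TRel Q X := fun a b => lam a.2 b.2 a.1 b.1

def tracePorts (z : A) : Fin 2 → Option (A ⊕ A ⊕ B) :=
  ![some (.inl z), some (.inr (.inl z))]

def elimMat (lam : LamFamily Q (A ⊕ A ⊕ B)) (z : A) : Mat2 Q :=
  fun i k => lam (tracePorts z i) (tracePorts z k)

def traceLink (S : Set A) (u v : A ⊕ A ⊕ B) : Prop :=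
  ∃ z ∈ S, (u = .inl z ∧ v = .inr (.inl z)) ∨ (u = .inr (.inl z) ∧ v = .inl z)

theorem traceLink_sup (S T : Set A) :
    (traceLink S ⊔ traceLink T : A ⊕ A ⊕ B → _ → Prop) = traceLink (S ∪ T) := by
  ext u v
  simp only [traceLink, Pi.sup_apply, sup_Prop_eq, Set.mem_union]
  grind

theorem portHop_traceLink_singleton {z : A} {a b : Q × Option (A ⊕ A ⊕ B)} :
    portHop (traceLink {z}) a b ↔
      a.1 = b.1 ∧ ∃ i, a.2 = tracePorts z i ∧ b.2 = tracePorts z (swap2 i) := by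
  constructor
  · rintro ⟨h, u, v, hu, hv, _, rfl, ⟨rfl, rfl⟩ | ⟨rfl, rfl⟩⟩
    exacts [⟨h, 0, hu, hv⟩, ⟨h, 1, hu, hv⟩]
  · rintro ⟨h, i, hu, hv⟩
    fin_cases i
    exacts [⟨h, _, _, hu, hv, z, rfl, .inl ⟨rfl, rfl⟩⟩,
      ⟨h, _, _, hu, hv, z, rfl, .inr ⟨rfl, rfl⟩⟩]

/-- Entry `j` of `u ⊙ Uⁿ` relates the endpoints of the walks from `x` with exactly `n` hops that
end at `tracePorts z j`. -/
theorem exists_altRowMul_altPow_iff (lam : LamFamily Q (A ⊕ A ⊕ B)) (z : A)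
    (x : Option (A ⊕ A ⊕ B)) (j : Fin 2) (q s : Q) :
    (∃ n, altRowMul (fun i => lam x (tracePorts z i)) (altPow (elimMat lam z) n) j q s) ↔
      walk (lamRel lam) (portHop (traceLink {z})) (q, x) (s, tracePorts z j) := by
  constructor
  · rintro ⟨n, h⟩
    induction n generalizing j s with
    | zero => rw [altPow, altRowMul_altOne] at h; exact walk_of_step h
    | succ n ih =>
      rw [altPow, altRowMul_altMul, altRowMul_apply] at h
      obtain ⟨i, t, hi, hU⟩ := h
      exact walk_snoc (c := (t, tracePorts z (swap2 i))) (ih _ _ hi)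
        (portHop_traceLink_singleton.2 ⟨rfl, i, rfl, rfl⟩) hU
  · rintro ⟨m, hm, hms⟩
    induction hm generalizing j s with
    | refl => exact ⟨0, by rw [altPow, altRowMul_altOne]; exact hms⟩
    | @tail _ c _ hcm ih =>
      obtain ⟨⟨t, _⟩, hc, hhop⟩ := hcm
      obtain ⟨t', y'⟩ := c
      obtain ⟨rfl, i, rfl, rfl⟩ := portHop_traceLink_singleton.1 hhop
      obtain ⟨n, hn⟩ := ih i t hc
      refine ⟨n + 1, ?_⟩
      rw [altPow, altRowMul_altMul, altRowMul_apply]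
      exact ⟨i, t, hn, hms⟩

theorem lamRel_elimStep (lam : LamFamily Q (A ⊕ A ⊕ B)) (z : A) :
    lamRel (elimStep lam z) = walk (lamRel lam) (portHop (traceLink {z})) := by
  ext ⟨q, x⟩ ⟨r, y⟩
  change lam x y q r ∨ (∃ n, altRowCol (altRowMul (fun i => lam x (tracePorts z i))
      (altPow (elimMat lam z) n)) (fun i => lam (tracePorts z i) y) q r) ↔ _
  rw [walk_iff]
  refine or_congr Iff.rfl ?_
  simp only [altRowCol_apply]
  constructor
  · rintro ⟨n, i, t, hn, hv⟩
    refine ⟨(t, tracePorts z i), (t, tracePorts z (swap2 i)), ?_,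
      portHop_traceLink_singleton.2 ⟨rfl, i, rfl, rfl⟩, hv⟩
    exact (exists_altRowMul_altPow_iff lam z x i q t).1 ⟨n, hn⟩
  · rintro ⟨⟨t, _⟩, ⟨_, _⟩, hw, hhop, hv⟩
    obtain ⟨rfl, i, rfl, rfl⟩ := portHop_traceLink_singleton.1 hhop
    obtain ⟨n, hn⟩ := (exists_altRowMul_altPow_iff lam z x i q t).2 hw
    exact ⟨n, i, t, hn, hv⟩

theorem lamRel_lamList (δ : TRel Q (A ⊕ A ⊕ B)) (L : List A) :
    lamRel (lamList δ L) = walk δ (portHop (traceLink {z | z ∈ L})) := by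
  induction L with
  | nil =>
    rw [walk_of_forall_not_hop (by simp [portHop, traceLink])]
    rfl
  | cons z L ih =>
    rw [lamList, lamRel_elimStep, ih, walk_walk, portHop_or, traceLink_sup]
    congr 3
    ext; simp

theorem kappa_eq [Fintype A] (δ : TRel Q (A ⊕ A ⊕ B)) :
    kappa δ = restrict (fun b => .inr (.inr b)) (walk δ (portHop (traceLink Set.univ))) := by
  have h := lamRel_lamList δ Finset.univ.toList
  simp only [Finset.mem_toList, Finset.mem_univ, Set.ofPred_true] at h
  rw [← h]
  rfl

end Kleene

section Sum

variable {Q Q' Q'' X Y Z : Type*}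

def sumLeft (δ : TRel Q X) : TRel (Q × Q') (X ⊕ Y) := fun a b =>
  ∃ u v, a.2 = u.map .inl ∧ b.2 = v.map .inl ∧ a.1.2 = b.1.2 ∧ δ (a.1.1, u) (b.1.1, v)

def sumRight (δ' : TRel Q' Y) : TRel (Q × Q') (X ⊕ Y) := fun a b =>
  ∃ u v, a.2 = u.map .inr ∧ b.2 = v.map .inr ∧ a.1.1 = b.1.1 ∧ δ' (a.1.2, u) (b.1.2, v)

theorem autSum_eq (δ : TRel Q X) (δ' : TRel Q' Y) :
    autSum δ δ' = fun a b => sumLeft δ a b ∨ sumRight δ' a b := rfl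

theorem walk_sumLeft (δ hop : TRel Q X) :
    walk (sumLeft (Q' := Q') (Y := Y) δ) (sumLeft hop) = sumLeft (walk δ hop) := by
  have hinj : Injective (Option.map (Sum.inl : X → X ⊕ Y)) :=
    Option.map_injective Sum.inl_injective
  ext a b
  constructor
  · rintro ⟨m, ham, hmb⟩
    induction ham generalizing b with
    | refl =>
      obtain ⟨u, v, hu, hv, ht, h⟩ := hmb
      exact ⟨u, v, hu, hv, ht, walk_of_step h⟩
    | tail _ hcm ih =>
      obtain ⟨k, hck, w₁, w₂, hk, hm, hkm, hhop⟩ := hcm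
      obtain ⟨u, w, hu, hk', hak, hwalk⟩ := ih k hck
      obtain ⟨w₃, v, hm', hv, hmb', hδ⟩ := hmb
      obtain rfl := hinj (hk'.symm.trans hk)
      obtain rfl := hinj (hm.symm.trans hm')
      exact ⟨u, v, hu, hv, hak.trans (hkm.trans hmb'), walk_snoc hwalk hhop hδ⟩
  · obtain ⟨⟨q, t⟩, x⟩ := a
    obtain ⟨⟨r, t'⟩, y⟩ := b
    rintro ⟨u, v, rfl, rfl, rfl, m, ham, hmb⟩
    let g : Q × Option X → (Q × Q') × Option (X ⊕ Y) := fun c => ((c.1, t), c.2.map .inl)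
    refine ⟨g m, ham.lift g fun c d ⟨k, hck, hkd⟩ => ?_, m.2, v, rfl, rfl, rfl, hmb⟩
    exact ⟨g k, ⟨c.2, k.2, rfl, rfl, rfl, hck⟩, ⟨k.2, d.2, rfl, rfl, rfl, hkd⟩⟩

theorem sumLeft_portHop (link : X → X → Prop) :
    sumLeft (Q := Q) (Q' := Q') (Y := Y) (portHop link) =
      portHop (Relation.Map link .inl .inl) := by
  ext ⟨⟨q, t⟩, x⟩ ⟨⟨r, t'⟩, y⟩
  simp only [sumLeft, portHop, Relation.Map, Prod.mk.injEq]
  constructor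
  · rintro ⟨_, _, rfl, rfl, rfl, rfl, u, v, rfl, rfl, huv⟩
    exact ⟨⟨rfl, rfl⟩, _, _, rfl, rfl, u, v, huv, rfl, rfl⟩
  · rintro ⟨⟨rfl, rfl⟩, _, _, rfl, rfl, u, v, huv, rfl, rfl⟩
    exact ⟨some u, some v, rfl, rfl, rfl, rfl, u, v, rfl, rfl, huv⟩

theorem autSum_walk_portHop_left (δ : TRel Q X) (δ' : TRel Q' Y) (link : X → X → Prop) :
    autSum (walk δ (portHop link)) δ' =
      walk (autSum δ δ') (portHop (Relation.Map link .inl .inl)) := by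
  have hdisj : ∀ (v : Option Y) (x : X), v.map Sum.inr ≠ some (Sum.inl x) := by
    rintro (_ | _) x <;> simp
  rw [autSum_eq, autSum_eq, walk_or_of_disjoint, ← sumLeft_portHop, walk_sumLeft]
  · rintro _ _ _ ⟨-, v, -, hv, -⟩ ⟨-, _, _, hb, -, _, _, -, rfl, -⟩
    exact hdisj v _ (hv.symm.trans hb)
  · rintro _ _ _ ⟨-, _, _, -, hb, _, _, -, -, rfl⟩ ⟨u, -, hu, -⟩
    exact hdisj u _ (hu.symm.trans hb)

theorem autSum_comm (δ : TRel Q X) (δ' : TRel Q' Y) :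
    autSum δ δ' = fun a b => autSum δ' δ (Prod.map Prod.swap (Option.map Sum.swap) a)
      (Prod.map Prod.swap (Option.map Sum.swap) b) := by
  have key : ∀ (x : Option (X ⊕ Y)) (u : Option Y),
      x.map Sum.swap = u.map Sum.inl ↔ x = u.map Sum.inr := by
    intro x u
    rw [show u.map Sum.inl = (u.map Sum.inr).map Sum.swap by cases u <;> rfl]
    exact (Option.map_injective Sum.swap_leftInverse.injective).eq_iff
  have key' : ∀ (x : Option (X ⊕ Y)) (u : Option X),
      x.map Sum.swap = u.map Sum.inr ↔ x = u.map Sum.inl := by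
    intro x u
    rw [show u.map Sum.inr = (u.map Sum.inl).map Sum.swap by cases u <;> rfl]
    exact (Option.map_injective Sum.swap_leftInverse.injective).eq_iff
  ext ⟨⟨q, q'⟩, x⟩ ⟨⟨r, r'⟩, y⟩
  simp only [autSum, Prod.map, Prod.fst_swap, Prod.snd_swap, key, key']
  exact or_comm

theorem autSum_walk_portHop_right (δ : TRel Q X) (δ' : TRel Q' Y) (link : Y → Y → Prop) :
    autSum δ (walk δ' (portHop link)) =
      walk (autSum δ δ') (portHop (Relation.Map link .inr .inr)) := by
  rw [autSum_comm δ, autSum_walk_portHop_left, autSum_comm δ δ',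
    walk_comap (Prod.map Prod.swap (Option.map Sum.swap)),
    map_portHop Prod.swap_surjective, Relation.map_map]
  rfl

theorem autSum_restrict_left {X' : Type*} (f : X' → X) (δ : TRel Q X) (δ' : TRel Q' Y) :
    autSum (restrict f δ) δ' = restrict (Sum.map f id) (autSum δ δ') := by
  ext ⟨⟨q, q'⟩, x⟩ ⟨⟨r, r'⟩, y⟩
  rcases x with _ | x | x <;> rcases y with _ | y | y <;> simp [autSum, restrict]

theorem autSum_restrict_right {Y' : Type*} (f : Y' → Y) (δ : TRel Q X) (δ' : TRel Q' Y) :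
    autSum δ (restrict f δ') = restrict (Sum.map id f) (autSum δ δ') := by
  ext ⟨⟨q, q'⟩, x⟩ ⟨⟨r, r'⟩, y⟩
  rcases x with _ | x | x <;> rcases y with _ | y | y <;> simp [autSum, restrict]

theorem autSum_assoc (δ : TRel Q X) (δ' : TRel Q' Y) (δ'' : TRel Q'' Z) :
    autSum (autSum δ δ') δ'' = fun a b => autSum δ (autSum δ' δ'')
      (Prod.map (Equiv.prodAssoc Q Q' Q'') (Option.map (Equiv.sumAssoc X Y Z)) a)
      (Prod.map (Equiv.prodAssoc Q Q' Q'') (Option.map (Equiv.sumAssoc X Y Z)) b) := by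
  ext ⟨⟨⟨q, q'⟩, q''⟩, x⟩ ⟨⟨⟨r, r'⟩, r''⟩, y⟩
  rcases x with _ | (x | x) | x <;> rcases y with _ | (y | y) | y <;>
    simp only [autSum, Prod.map_apply, Equiv.prodAssoc_apply, Prod.mk.injEq, Option.map_none,
      Option.map_some, Option.none_eq_map_iff, Option.some_eq_map_iff, Equiv.sumAssoc_apply_inl_inl,
      Equiv.sumAssoc_apply_inl_inr, Equiv.sumAssoc_apply_inr, Sum.inl.injEq, Sum.inr.injEq,
      reduceCtorEq, exists_eq_left, exists_eq_right, exists_and_left, existsAndEq] <;> grind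

end Sum

section Comp

variable {Q Q' A B C : Type*}

def compLink (A B C : Type*) (u v : (A ⊕ B) ⊕ (B ⊕ C)) : Prop :=
  ∃ b, (u = .inl (.inr b) ∧ v = .inr (.inl b)) ∨ (u = .inr (.inl b) ∧ v = .inl (.inr b))

theorem compAut_eq [Fintype B] (δ : TRel Q (A ⊕ B)) (δ' : TRel Q' (B ⊕ C)) :
    compAut δ δ' =
      restrict (Sum.map .inl .inr) (walk (autSum δ δ') (portHop (compLink A B C))) := by
  have hlink : Relation.Map (traceLink Set.univ) (compPerm A B C).symm (compPerm A B C).symm =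
      compLink A B C := by
    ext u v
    simp only [Relation.Map, traceLink, compLink, Set.mem_univ, true_and]
    constructor
    · rintro ⟨_, _, ⟨b, ⟨rfl, rfl⟩ | ⟨rfl, rfl⟩⟩, rfl, rfl⟩
      exacts [⟨b, .inl ⟨rfl, rfl⟩⟩, ⟨b, .inr ⟨rfl, rfl⟩⟩]
    · rintro ⟨b, ⟨rfl, rfl⟩ | ⟨rfl, rfl⟩⟩
      exacts [⟨_, _, ⟨b, .inl ⟨rfl, rfl⟩⟩, rfl, rfl⟩,
        ⟨_, _, ⟨b, .inr ⟨rfl, rfl⟩⟩, rfl, rfl⟩]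
  have hemb : (compPerm A B C).symm ∘ (fun x => .inr (.inr x)) = Sum.map .inl .inr := by
    ext (a | c) <;> rfl
  rw [compAut, kappa_eq]
  change restrict _ (walk (restrict (compPerm A B C).symm (autSum δ δ')) _) = _
  rw [walk_restrict, restrict_restrict, hlink, hemb]

end Comp

section Assoc

variable {Q Q' Q'' A B C D : Type*}

theorem compAut_compAut_left [Fintype B] [Fintype C] (δ : TRel Q (A ⊕ B))
    (δ' : TRel Q' (B ⊕ C)) (δ'' : TRel Q'' (C ⊕ D)) :
    compAut (compAut δ δ') δ'' =
      restrict (Sum.map (Sum.map .inl .inr) id ∘ Sum.map .inl .inr)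
        (walk (autSum (autSum δ δ') δ'')
          (portHop (Relation.Map (compLink A B C) .inl .inl ⊔
            Relation.Map (compLink A C D) (Sum.map (Sum.map .inl .inr) id)
              (Sum.map (Sum.map .inl .inr) id)))) := by
  rw [compAut_eq, compAut_eq, autSum_restrict_left, autSum_walk_portHop_left, walk_restrict,
    walk_walk, portHop_or, restrict_restrict]

theorem compAut_compAut_right [Fintype B] [Fintype C] (δ : TRel Q (A ⊕ B))
    (δ' : TRel Q' (B ⊕ C)) (δ'' : TRel Q'' (C ⊕ D)) :
    compAut δ (compAut δ' δ'') =
      restrict (Sum.map id (Sum.map .inl .inr) ∘ Sum.map .inl .inr)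
        (walk (autSum δ (autSum δ' δ''))
          (portHop (Relation.Map (compLink B C D) .inr .inr ⊔
            Relation.Map (compLink A B D) (Sum.map id (Sum.map .inl .inr))
              (Sum.map id (Sum.map .inl .inr))))) := by
  rw [compAut_eq, compAut_eq, autSum_restrict_right, autSum_walk_portHop_right, walk_restrict,
    walk_walk, portHop_or, restrict_restrict]

theorem map_sumAssoc_compLink :
    Relation.Map (Relation.Map (compLink A B C) .inl .inl ⊔
        Relation.Map (compLink A C D) (Sum.map (Sum.map .inl .inr) id)
          (Sum.map (Sum.map .inl .inr) id))
      (Equiv.sumAssoc _ _ _) (Equiv.sumAssoc _ _ _) =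
    Relation.Map (compLink B C D) .inr .inr ⊔
      Relation.Map (compLink A B D) (Sum.map id (Sum.map .inl .inr))
        (Sum.map id (Sum.map .inl .inr)) := by
  ext u v
  constructor
  · rintro ⟨_, _, ⟨_, _, ⟨b, ⟨rfl, rfl⟩ | ⟨rfl, rfl⟩⟩, rfl, rfl⟩ |
      ⟨_, _, ⟨c, ⟨rfl, rfl⟩ | ⟨rfl, rfl⟩⟩, rfl, rfl⟩, rfl, rfl⟩
    exacts [.inr ⟨_, _, ⟨b, .inl ⟨rfl, rfl⟩⟩, rfl, rfl⟩,
      .inr ⟨_, _, ⟨b, .inr ⟨rfl, rfl⟩⟩, rfl, rfl⟩,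
      .inl ⟨_, _, ⟨c, .inl ⟨rfl, rfl⟩⟩, rfl, rfl⟩,
      .inl ⟨_, _, ⟨c, .inr ⟨rfl, rfl⟩⟩, rfl, rfl⟩]
  · rintro (⟨_, _, ⟨c, ⟨rfl, rfl⟩ | ⟨rfl, rfl⟩⟩, rfl, rfl⟩ |
      ⟨_, _, ⟨b, ⟨rfl, rfl⟩ | ⟨rfl, rfl⟩⟩, rfl, rfl⟩)
    exacts [⟨_, _, .inr ⟨_, _, ⟨c, .inl ⟨rfl, rfl⟩⟩, rfl, rfl⟩, rfl, rfl⟩,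
      ⟨_, _, .inr ⟨_, _, ⟨c, .inr ⟨rfl, rfl⟩⟩, rfl, rfl⟩, rfl, rfl⟩,
      ⟨_, _, .inl ⟨_, _, ⟨b, .inl ⟨rfl, rfl⟩⟩, rfl, rfl⟩, rfl, rfl⟩,
      ⟨_, _, .inl ⟨_, _, ⟨b, .inr ⟨rfl, rfl⟩⟩, rfl, rfl⟩, rfl, rfl⟩]

end Assoc

theorem comp_assoc_general {Q Q' Q'' A B C D : Type*}
    [Fintype B] [Fintype C]
    (δ : TRel Q (A ⊕ B)) (δ' : TRel Q' (B ⊕ C)) (δ'' : TRel Q'' (C ⊕ D)) :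
    ∀ (q r : Q) (q' r' : Q') (q'' r'' : Q'') (x y : Option (A ⊕ D)),
      compAut (compAut δ δ') δ'' (((q, q'), q''), x) (((r, r'), r''), y) ↔
      compAut δ (compAut δ' δ'') ((q, (q', q'')), x) ((r, (r', r'')), y) := by
  intro q r q' r' q'' r'' x y
  rw [compAut_compAut_left, compAut_compAut_right, autSum_assoc, walk_comap,
    map_portHop (Equiv.prodAssoc Q Q' Q'').surjective, map_sumAssoc_compLink]
  rcases x with _ | a | d <;> rcases y with _ | a' | d' <;> rfl

/-- Associativity of the derived composition of Turing automata, up to the canonical state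
bijection `(Q × Q') × Q'' ≅ Q × (Q' × Q'')`: for Turing automata of sorts `A ⊕ B`,
`B ⊕ C`, `C ⊕ D` (`B`, `C` finite), the transition relations of `(T ∘ T') ∘ T''` and
`T ∘ (T' ∘ T'')` coincide. -/
theorem comp_assoc {Q Q' Q'' A B C D : Type*} [Nonempty Q] [Nonempty Q'] [Nonempty Q'']
    [Fintype B] [Fintype C]
    (δ : TRel Q (A ⊕ B)) (δ' : TRel Q' (B ⊕ C)) (δ'' : TRel Q'' (C ⊕ D)) :
    ∀ (q r : Q) (q' r' : Q') (q'' r'' : Q'') (x y : Option (A ⊕ D)),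
      compAut (compAut δ δ') δ'' (((q, q'), q''), x) (((r, r'), r''), y) ↔
      compAut δ (compAut δ' δ'') ((q, (q', q'')), x) ((r, (r', r'')), y) :=
  comp_assoc_general δ δ' δ''
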